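/- Let A, B be finite nonempty sets of integers with min A = min B = 0, max A = M, max B = N, M ≥ N, |A+B| = |A|+|B|-1+r, h_A = |[0,M]\A| ≤ |B| - 2, and r ≤ |B| - 2 - δ(A,B), where δ(A,B) = 1 if A ⊆ B and 0 otherwise. If x ∈ [0,N] \ B satisfies x ∉ A+B (left stable) and y ∈ [0,N] \ B satisfies y + M ∉ A+B (right stable), then x < y. -/

import Mathlib

open scoped Pointwise
open scoped Classical

/-!
If `p ∉ A + B`, then `b ↦ p - b` maps `{b ∈ B | p - M ≤ b ≤ p}` injectively into the holes
`[0, M] \ A`. Suppose `x` is left stable, `y` right stable and `y ≤ x`; take such a pair `(p, q)`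
with `p - q` minimal, so that every non-element of `B` strictly between `q` and `p` is unstable.
The maps `b ↦ p - b` (`b < p`) and `b ↦ q + M - b` (`b > q`) together cover `B` plus the elements
of `B` between `q` and `p`, and collide only at those `b` with `b + (q + M - p) ∈ B`, at most
`p - q + 1` many. Since the holes of `A + B` are the left stable points together with the right
stable points shifted by `M`, one has `r = h_A + #unstable`, and the count yields `|B| ≤ r + 2`.
Equality forces `M = N` and `[0, p - q] ⊆ B` while every `a ∈ A \ B` lies between `q` and `p`;
then `p = a + (p - a) ∈ A + B`, so equality needs `A ⊆ B`.
-/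

open Finset

theorem subset_Icc_min'_max' {α : Type*} [LinearOrder α] [LocallyFiniteOrder α] (s : Finset α)
    (hs : s.Nonempty) : s ⊆ Icc (s.min' hs) (s.max' hs) :=
  fun a ha => mem_Icc.2 ⟨s.min'_le a ha, s.le_max' a ha⟩

noncomputable def leftStable (A B : Finset ℤ) (N : ℤ) : Finset ℤ :=
  (Icc 0 N \ B).filter (· ∉ A + B)

noncomputable def rightStable (A B : Finset ℤ) (M N : ℤ) : Finset ℤ :=
  (Icc 0 N \ B).filter (· + M ∉ A + B)

noncomputable def unstable (A B : Finset ℤ) (M N : ℤ) : Finset ℤ :=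
  (Icc 0 N \ B).filter fun z => z ∈ A + B ∧ z + M ∈ A + B

variable {A B : Finset ℤ} {M N : ℤ}

theorem sub_mem_sdiff_of_notMem_add {p b : ℤ} (hp : p ∉ A + B) (hb : b ∈ B)
    (hpb : p - M ≤ b) (hbp : b ≤ p) : p - b ∈ Icc 0 M \ A := by
  refine mem_sdiff.2 ⟨mem_Icc.2 ⟨by omega, by omega⟩, fun ha => hp ?_⟩
  simpa using add_mem_add ha hb

theorem mem_add_of_card_sdiff_lt (hB : B ⊆ Icc 0 N) (hcard : #(Icc 0 M \ A) < #B) {h : ℤ}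
    (hNh : N ≤ h) (hhM : h ≤ M) : h ∈ A + B := by
  by_contra hh
  have hsub : B.image (h - ·) ⊆ Icc 0 M \ A := by
    refine image_subset_iff.2 fun b hb => ?_
    have := mem_Icc.1 (hB hb)
    exact sub_mem_sdiff_of_notMem_add hh hb (by omega) (by omega)
  have := card_le_card hsub
  rw [card_image_of_injective _ sub_right_injective] at this
  omega

theorem card_add_card_filter_between_le (hB : B ⊆ Icc 0 M) {p q : ℤ} (hq : 0 ≤ q)
    (hqp : q ≤ p) (hpM : p ≤ M) (hpB : p ∉ B) (hp : p ∉ A + B) (hqM : q + M ∉ A + B) :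
    #B + #(B.filter fun b => q < b ∧ b < p) ≤
      #(Icc 0 M \ A) + #(B.filter fun b => b + (q + M - p) ∈ B) := by
  set L := (B.filter (· < p)).image (p - ·)
  set R := (B.filter (q < ·)).image (q + M - ·)
  have hL : #L = #(B.filter (· < p)) := card_image_of_injective _ sub_right_injective
  have hR : #R = #(B.filter (q < ·)) := card_image_of_injective _ sub_right_injective
  have hunion : L ∪ R ⊆ Icc 0 M \ A := by
    refine union_subset (image_subset_iff.2 fun b hb => ?_) (image_subset_iff.2 fun b hb => ?_)
    all_goals
      obtain ⟨hbB, hb'⟩ := mem_filter.1 hb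
      have := mem_Icc.1 (hB hbB)
    · exact sub_mem_sdiff_of_notMem_add hp hbB (by omega) (by omega)
    · exact sub_mem_sdiff_of_notMem_add hqM hbB (by omega) (by omega)
  have hinter : L ∩ R ⊆ (B.filter fun b => b + (q + M - p) ∈ B).image (p - ·) := by
    intro u hu
    obtain ⟨b₁, hb₁, rfl⟩ := mem_image.1 (mem_inter.1 hu).1
    obtain ⟨b₂, hb₂, hb₁₂⟩ := mem_image.1 (mem_inter.1 hu).2
    have hb₂' : b₁ + (q + M - p) = b₂ := by omega
    exact mem_image_of_mem _ (mem_filter.2 ⟨(mem_filter.1 hb₁).1, hb₂' ▸ (mem_filter.1 hb₂).1⟩)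
  have hsplit : #(B.filter (· < p)) + #(B.filter (q < ·)) =
      #B + #(B.filter fun b => q < b ∧ b < p) := by
    rw [← card_union_add_card_inter, ← filter_or, ← filter_and, filter_true_of_mem]
    · simp only [and_comm]
    · intro b hb
      by_contra! h
      exact hpB (le_antisymm (h.2.trans hqp) h.1 ▸ hb)
  have := card_union_add_card_inter L R
  have := card_le_card hunion
  have := (card_le_card hinter).trans card_image_le
  omega

theorem filter_add_mem_subset_Icc (hB : B ⊆ Icc 0 N) (d : ℤ) :
    B.filter (· + d ∈ B) ⊆ Icc 0 (N - d) := by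
  intro b hb
  obtain ⟨hb, hbd⟩ := mem_filter.1 hb
  have := mem_Icc.1 (hB hb)
  have := mem_Icc.1 (hB hbd)
  exact mem_Icc.2 ⟨by omega, by omega⟩

theorem disjoint_leftStable_rightStable (hB : B ⊆ Icc 0 N) (hNM : N ≤ M)
    (hcard : #(Icc 0 M \ A) + 2 ≤ #B) : Disjoint (leftStable A B N) (rightStable A B M N) := by
  refine disjoint_left.2 fun z hzl hzr => ?_
  obtain ⟨hz, hzL⟩ := mem_filter.1 hzl
  have hzR := (mem_filter.1 hzr).2
  have := mem_Icc.1 (mem_sdiff.1 hz).1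
  have hcount := card_add_card_filter_between_le (hB.trans (Icc_subset_Icc le_rfl hNM))
    this.1 le_rfl (this.2.trans hNM) (mem_sdiff.1 hz).2 hzL hzR
  have hsub := filter_add_mem_subset_Icc hB (z + M - z)
  have := (card_le_card hsub).trans_eq (Int.card_Icc _ _)
  omega

theorem card_Icc_sdiff_eq_stable_add_unstable
    (hdisj : Disjoint (leftStable A B N) (rightStable A B M N)) :
    #(Icc 0 N \ B) =
      #(leftStable A B N) + #(rightStable A B M N) + #(unstable A B M N) := by
  have hright : ((Icc 0 N \ B).filter (· ∈ A + B)).filter (· + M ∉ A + B) =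
      rightStable A B M N := by
    rw [filter_filter]
    refine filter_congr fun z hz => and_iff_right_of_imp fun hzM => ?_
    by_contra hzA
    exact disjoint_left.1 hdisj (mem_filter.2 ⟨hz, hzA⟩) (mem_filter.2 ⟨hz, hzM⟩)
  have hunstable : ((Icc 0 N \ B).filter (· ∈ A + B)).filter (· + M ∈ A + B) =
      unstable A B M N := filter_filter _ _ _
  rw [← card_filter_add_card_filter_not (· ∈ A + B),
    ← card_filter_add_card_filter_not (s := (Icc 0 N \ B).filter (· ∈ A + B)) (· + M ∈ A + B),
    hunstable, hright, leftStable]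
  omega

theorem card_Icc_sdiff_add_eq_stable (h0A : 0 ∈ A) (hMA : M ∈ A) (hNM : N ≤ M)
    (hgap : ∀ h, N ≤ h → h ≤ M → h ∈ A + B) :
    #(Icc 0 (M + N) \ (A + B)) = #(leftStable A B N) + #(rightStable A B M N) := by
  have hnotB : ∀ {a z}, a ∈ A → z + a ∉ A + B → z ∉ B := fun ha hz hzB =>
    hz (by simpa [add_comm] using add_mem_add ha hzB)
  have heq : Icc 0 (M + N) \ (A + B) =
      leftStable A B N ∪ (rightStable A B M N).image (· + M) := by
    ext w
    simp only [mem_sdiff, mem_union, mem_image, leftStable, rightStable, mem_filter, mem_Icc]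
    constructor
    · rintro ⟨⟨hw0, hwMN⟩, hw⟩
      by_cases hwN : w ≤ N
      · exact .inl ⟨⟨⟨hw0, hwN⟩, hnotB h0A (by simpa using hw)⟩, hw⟩
      · have hwM : M < w := by
          by_contra!
          exact hw (hgap w (by omega) this)
        have hw' : w - M + M ∉ A + B := by simpa using hw
        exact .inr ⟨w - M, ⟨⟨⟨by omega, by omega⟩, hnotB hMA hw'⟩, hw'⟩, by simp⟩
    · rintro (⟨⟨⟨hw0, hwN⟩, -⟩, hw⟩ | ⟨z, ⟨⟨⟨hz0, hzN⟩, -⟩, hz⟩, rfl⟩)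
      · exact ⟨⟨hw0, by omega⟩, hw⟩
      · exact ⟨⟨by omega, by omega⟩, hz⟩
  have hdisj : Disjoint (leftStable A B N) ((rightStable A B M N).image (· + M)) := by
    refine disjoint_left.2 fun w hw hw' => ?_
    obtain ⟨z, hz, rfl⟩ := mem_image.1 hw'
    have := mem_Icc.1 (mem_sdiff.1 (mem_filter.1 hw).1).1
    have := mem_Icc.1 (mem_sdiff.1 (mem_filter.1 hz).1).1
    exact (mem_filter.1 hw).2 (hgap _ (by omega) (by omega))
  rw [heq, card_union_of_disjoint hdisj, card_image_of_injective _ (add_left_injective M)]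

theorem card_add_eq_card_add_card_sub_one_add (hA : A ⊆ Icc 0 M) (hB : B ⊆ Icc 0 N)
    (h0A : 0 ∈ A) (hMA : M ∈ A) (h0B : 0 ∈ B) (hNM : N ≤ M)
    (hgap : ∀ h, N ≤ h → h ≤ M → h ∈ A + B)
    (hdisj : Disjoint (leftStable A B N) (rightStable A B M N)) :
    (#(A + B) : ℤ) = #A + #B - 1 + (#(Icc 0 M \ A) + #(unstable A B M N)) := by
  have hAB : A + B ⊆ Icc 0 (M + N) := by
    simpa using (add_subset_add hA hB).trans (Icc_add_Icc_subset 0 M 0 N)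
  have hcardA := card_sdiff_add_card_eq_card hA
  have hcardB := card_sdiff_add_card_eq_card hB
  have hcardAB := card_sdiff_add_card_eq_card hAB
  rw [card_Icc_sdiff_eq_stable_add_unstable hdisj] at hcardB
  rw [card_Icc_sdiff_add_eq_stable h0A hMA hNM hgap] at hcardAB
  have := (mem_Icc.1 (hA h0A)).2
  have := (mem_Icc.1 (hB h0B)).2
  simp only [Int.card_Icc] at hcardA hcardB hcardAB
  omega

theorem exists_stable_pair_Ioo_sdiff_subset_unstable {x y : ℤ} (hx : x ∈ leftStable A B N)
    (hy : y ∈ rightStable A B M N) (hyx : y ≤ x) :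
    ∃ p ∈ leftStable A B N, ∃ q ∈ rightStable A B M N,
      q ≤ p ∧ Ioo q p \ B ⊆ unstable A B M N := by
  let P := (leftStable A B N ×ˢ rightStable A B M N).filter fun pq => pq.2 ≤ pq.1
  obtain ⟨⟨p, q⟩, hpq, hmin⟩ :=
    P.exists_min_image (fun pq => pq.1 - pq.2) ⟨(x, y), by simp [P, hx, hy, hyx]⟩
  simp only [P, mem_filter, mem_product, and_imp, Prod.forall] at hpq hmin
  obtain ⟨⟨hp, hq⟩, hqp⟩ := hpq
  refine ⟨p, hp, q, hq, hqp, fun z hz => ?_⟩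
  obtain ⟨hz, hzB⟩ := mem_sdiff.1 hz
  obtain ⟨hqz, hzp⟩ := mem_Ioo.1 hz
  have := mem_Icc.1 (mem_sdiff.1 (mem_filter.1 hp).1).1
  have := mem_Icc.1 (mem_sdiff.1 (mem_filter.1 hq).1).1
  have hzI : z ∈ Icc 0 N \ B := mem_sdiff.2 ⟨mem_Icc.2 ⟨by omega, by omega⟩, hzB⟩
  refine mem_filter.2 ⟨hzI, ?_, ?_⟩
  · by_contra h
    have := hmin z q (mem_filter.2 ⟨hzI, h⟩) hq hqz.le
    omega
  · by_contra h
    have := hmin p z hp (mem_filter.2 ⟨hzI, h⟩) hzp.le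
    omega

theorem card_le_of_stable_pair (hA : A ⊆ Icc 0 M) (hB : B ⊆ Icc 0 N) (h0B : 0 ∈ B)
    (hNB : N ∈ B) (hNM : N ≤ M) {p q : ℤ} (hp : p ∈ leftStable A B N)
    (hq : q ∈ rightStable A B M N) (hqp : q ≤ p) (hK : Ioo q p \ B ⊆ unstable A B M N) :
    #B ≤ #(Icc 0 M \ A) + #(unstable A B M N) + 1 + if A ⊆ B then 1 else 0 := by
  obtain ⟨hpI, hpA⟩ := mem_filter.1 hp
  obtain ⟨hqI, hqA⟩ := mem_filter.1 hq
  have := mem_Icc.1 (mem_sdiff.1 hpI).1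
  have := mem_Icc.1 (mem_sdiff.1 hqI).1
  set F := B.filter fun b => q < b ∧ b < p
  set K := unstable A B M N
  set Bd := B.filter (· + (q + M - p) ∈ B)
  have hcount : #B + #F ≤ #(Icc 0 M \ A) + #Bd :=
    card_add_card_filter_between_le (hB.trans (Icc_subset_Icc le_rfl hNM)) (by omega) hqp
      (by omega) (mem_sdiff.1 hpI).2 hpA hqA
  have hBd : Bd ⊆ Icc 0 (N - (q + M - p)) := filter_add_mem_subset_Icc hB _
  have hIoo : Ioo q p ⊆ F ∪ K := fun z hz => by
    by_cases hzB : z ∈ B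
    · exact mem_union_left _ (mem_filter.2 ⟨hzB, mem_Ioo.1 hz⟩)
    · exact mem_union_right _ (hK (mem_sdiff.2 ⟨hz, hzB⟩))
  have hcardBd := (card_le_card hBd).trans_eq (Int.card_Icc _ _)
  have hcardFK := card_union_le F K
  have hcardIoo := (card_le_card hIoo).trans' (Int.card_Ioo q p).ge
  split_ifs with hAB
  · omega
  by_contra! hlt
  -- every estimate above is now an equality
  obtain ⟨a, haA, haB⟩ := not_subset.1 hAB
  have hMN : M = N := by omega
  have hBd_eq : Bd = Icc 0 (N - (q + M - p)) :=
    eq_of_subset_of_card_le hBd (by rw [Int.card_Icc]; omega)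
  have hIoo_eq : Ioo q p = F ∪ K := eq_of_subset_of_card_le hIoo (by rw [Int.card_Ioo]; omega)
  have haK : a ∈ K := by
    refine mem_filter.2 ⟨mem_sdiff.2 ⟨hMN ▸ hA haA, haB⟩, ?_, add_mem_add haA (hMN ▸ hNB)⟩
    simpa using add_mem_add haA h0B
  have ha := mem_Ioo.1 (hIoo_eq ▸ mem_union_right F haK)
  have hpa : p - a ∈ Bd := hBd_eq ▸ mem_Icc.2 ⟨by omega, by omega⟩
  exact hpA (by simpa using add_mem_add haA (mem_filter.1 hpa).1)

theorem stmt7 (A B : Finset ℤ) (hA : A.Nonempty) (hB : B.Nonempty) (M N r : ℤ)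
    (hminA : A.min' hA = 0) (hminB : B.min' hB = 0)
    (hmaxA : A.max' hA = M) (hmaxB : B.max' hB = N) (hMN : N ≤ M)
    (hr : ((A + B).card : ℤ) = (A.card : ℤ) + (B.card : ℤ) - 1 + r)
    (hhole : ((Finset.Icc 0 M \ A).card : ℤ) ≤ (B.card : ℤ) - 2)
    (hrb : r ≤ (B.card : ℤ) - 2 - (if A ⊆ B then 1 else 0))
    (x y : ℤ) (hx : x ∈ Finset.Icc 0 N) (hxB : x ∉ B) (hxL : x ∉ A + B)
    (hy : y ∈ Finset.Icc 0 N) (hyB : y ∉ B) (hyR : y + M ∉ A + B) :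
    x < y := by
  have hAI : A ⊆ Icc 0 M := hminA ▸ hmaxA ▸ subset_Icc_min'_max' A hA
  have hBI : B ⊆ Icc 0 N := hminB ▸ hmaxB ▸ subset_Icc_min'_max' B hB
  have h0A : 0 ∈ A := hminA ▸ A.min'_mem hA
  have hMA : M ∈ A := hmaxA ▸ A.max'_mem hA
  have h0B : 0 ∈ B := hminB ▸ B.min'_mem hB
  have hNB : N ∈ B := hmaxB ▸ B.max'_mem hB
  have hholes : #(Icc 0 M \ A) + 2 ≤ #B := by omega
  have hgap : ∀ h, N ≤ h → h ≤ M → h ∈ A + B := fun _ => mem_add_of_card_sdiff_lt hBI (by omega)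
  have hdisj := disjoint_leftStable_rightStable hBI hMN hholes
  have hcard := card_add_eq_card_add_card_sub_one_add hAI hBI h0A hMA h0B hMN hgap hdisj
  by_contra! hyx
  obtain ⟨p, hp, q, hq, hqp, hK⟩ := exists_stable_pair_Ioo_sdiff_subset_unstable
    (mem_filter.2 ⟨mem_sdiff.2 ⟨hx, hxB⟩, hxL⟩) (mem_filter.2 ⟨mem_sdiff.2 ⟨hy, hyB⟩, hyR⟩) hyx
  have hbound := card_le_of_stable_pair hAI hBI h0B hNB hMN hp hq hqp hK
  split_ifs at hrb hbound <;> omega
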